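/- (Aguiar–Sottile formula) For any planar binary rooted tree t, the coproduct of the Möbius element satisfies Δ(M_t) = Σ_{z₁ ⋋ z₂ = t} M_{z₁} ⊗ M_{z₂}, where the sum runs over all factorizations of t (including the trivial ones with z₁ = 1 or z₂ = 1, setting M_1 = 1). -/

import Mathlib

open Classical

/-- Planar binary rooted trees. `leaf` is the unique tree `|` with one leaf. -/
inductive PBT : Type
  | leaf : PBT
  | node : PBT → PBT → PBT
  deriving DecidableEq

/-- Number of leaves of a planar binary rooted tree. -/
def leavesCount : PBT → ℕ
  | .leaf => 1
  | .node l r => leavesCount l + leavesCount r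

/-- Graft the tree `w` onto the leftmost (first) leaf of `t`. -/
def graft1 : PBT → PBT → PBT
  | .leaf, w => w
  | .node l r, w => .node (graft1 l w) r

/-- The product `t ⋋ w := w ∘₁ (t ∨ |)`. -/
def lprod (t w : PBT) : PBT := graft1 w (.node t .leaf)

/-- A tree is `⋋`-irreducible if it is not a product of two (nonempty) trees. -/
def Irr (t : PBT) : Prop := ¬ ∃ u w : PBT, t = lprod u w

/-- One covering move of the Tamari order: a right rotation
`(a ∨ b) ∨ c ↦ a ∨ (b ∨ c)` applied at some internal node. -/
inductive TStep : PBT → PBT → Prop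
  | rot (a b c : PBT) : TStep (.node (.node a b) c) (.node a (.node b c))
  | left {a a' : PBT} (c : PBT) : TStep a a' → TStep (.node a c) (.node a' c)
  | right (a : PBT) {c c' : PBT} : TStep c c' → TStep (.node a c) (.node a c')

/-- The Tamari order on planar binary rooted trees: the reflexive transitive
closure of the rotation moves. -/
def tle : PBT → PBT → Prop := Relation.ReflTransGen TStep

/-- `∨` extended to trees-with-unit, the unit (`none`) acting as a unit. -/
def ovee : Option PBT → Option PBT → Option PBT
  | none, b => b
  | a, none => a
  | some t, some w => some (PBT.node t w)

/-- The coproduct on trees (with values in the free module on pairs of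
trees-with-unit): `Δ(t ∨ w) = Σ t₍₁₎ ⊗ (t₍₂₎ ∨ w) + Σ (t ∨ w₍₁₎) ⊗ w₍₂₎ − t ⊗ w`. -/
noncomputable def D0 : PBT → ((Option PBT × Option PBT) →₀ ℤ)
  | .leaf =>
      Finsupp.single (none, some PBT.leaf) 1 + Finsupp.single (some PBT.leaf, none) 1
  | .node t w =>
      ((D0 t).sum fun p a => a • Finsupp.single (p.1, ovee p.2 (some w)) 1) +
      ((D0 w).sum fun p a => a • Finsupp.single (ovee (some t) p.1, p.2) 1) -
      Finsupp.single (some t, some w) 1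

/-- The coproduct `Δ` on the vector space spanned by trees and the unit:
`Δ(1) = 1 ⊗ 1` and on trees it is given by `D0`. -/
noncomputable def D : Option PBT → ((Option PBT × Option PBT) →₀ ℤ)
  | none => Finsupp.single (none, none) 1
  | some t => D0 t

/-- `⋋` extended to trees-with-unit, the unit (`none`) acting as a unit. -/
def olprod : Option PBT → Option PBT → Option PBT
  | none, b => b
  | a, none => a
  | some t, some w => some (lprod t w)

/-- The linear extension of the coproduct `Δ`. -/
noncomputable def Dhat (f : Option PBT →₀ ℤ) : (Option PBT × Option PBT) →₀ ℤ :=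
  f.sum fun x a => a • D x

/-- The tensor product of two elements of the free module on trees-with-unit. -/
noncomputable def tens (f g : Option PBT →₀ ℤ) : (Option PBT × Option PBT) →₀ ℤ :=
  f.sum fun x a => g.sum fun y b => (a * b) • Finsupp.single (x, y) 1

/-!
Since `μ` is the Möbius function of the Tamari order, `Σ_{s ≤ t} M_s = t`, and `Δ(t)` is the sum
of the `n + 1` vertical cuts `(t₁, t₂)` of `t` (`n` the number of leaves). A pair satisfies
`z₁ ⋋ z₂ ≤ t` exactly when `z₁ ≤ t₁` and `z₂ ≤ t₂` for some cut `(t₁, t₂)` of `t`, and this cut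
is unique: it is the one at gap `|z₁|`. Hence
`Σ_{s ≤ t} Σ_{z₁ ⋋ z₂ = s} M_{z₁} ⊗ M_{z₂} = Σ_{(t₁, t₂)} t₁ ⊗ t₂ = Δ(t)`,
and Möbius inversion of this identity is the formula.
-/

open Finset

lemma leavesCount_pos (t : PBT) : 0 < leavesCount t := by
  induction t with
  | leaf => exact Nat.one_pos
  | node l r ihl _ => exact Nat.add_pos_left ihl _

lemma TStep.leavesCount_eq {s t : PBT} (h : TStep s t) : leavesCount s = leavesCount t := by
  induction h with
  | rot => simp only [leavesCount]; omega
  | left _ _ ih | right _ _ ih => simp only [leavesCount, ih]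

lemma tle_lift {β : Type*} [Preorder β] (f : PBT → β) (hf : ∀ a b, TStep a b → f a ≤ f b)
    {a b : PBT} (h : tle a b) : f a ≤ f b := by
  simpa only [Relation.reflTransGen_eq_self] using Relation.ReflTransGen.lift f hf _ _ h

def rotationWeight : PBT → ℕ
  | .leaf => 0
  | .node l r => rotationWeight l + rotationWeight r + leavesCount r

lemma TStep.rotationWeight_lt {s t : PBT} (h : TStep s t) :
    rotationWeight s < rotationWeight t := by
  induction h with
  | rot _ _ c => simp only [rotationWeight, leavesCount]; have := leavesCount_pos c; omega
  | left _ _ ih => simp only [rotationWeight]; omega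
  | right _ h ih => simp only [rotationWeight, h.leavesCount_eq]; omega

instance : PartialOrder PBT where
  le := tle
  le_refl _ := Relation.ReflTransGen.refl
  le_trans _ _ _ := Relation.ReflTransGen.trans
  le_antisymm s t hst hts := by
    have weight_le {a b : PBT} : tle a b → rotationWeight a ≤ rotationWeight b :=
      tle_lift rotationWeight fun _ _ h => h.rotationWeight_lt.le
    rcases hst.cases_head with rfl | ⟨u, hsu, hut⟩
    · rfl
    · exact absurd (hsu.rotationWeight_lt.trans_le ((weight_le hut).trans (weight_le hts)))
        (lt_irrefl _)

lemma TStep.le {s t : PBT} (h : TStep s t) : s ≤ t := Relation.ReflTransGen.single h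

lemma leavesCount_eq_of_le {s t : PBT} (h : s ≤ t) : leavesCount s = leavesCount t := by
  induction h with
  | refl => rfl
  | tail _ h ih => exact ih.trans h.leavesCount_eq

lemma finite_setOf_leavesCount_le (n : ℕ) : {t : PBT | leavesCount t ≤ n}.Finite := by
  induction n with
  | zero =>
    convert Set.finite_empty
    exact Set.eq_empty_of_forall_notMem fun t ht => (leavesCount_pos t).ne' (Nat.le_zero.mp ht)
  | succ n ih =>
    refine ((ih.image2 PBT.node ih).insert PBT.leaf).subset ?_
    rintro (_ | ⟨l, r⟩) h
    · exact Set.mem_insert _ _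
    · have := leavesCount_pos l
      have := leavesCount_pos r
      simp only [Set.mem_ofPred_eq, leavesCount] at h
      exact Or.inr ⟨l, show _ ≤ n by omega, r, show _ ≤ n by omega, rfl⟩

lemma PBT.finite_Iic (t : PBT) : (Set.Iic t).Finite :=
  (finite_setOf_leavesCount_le (leavesCount t)).subset fun _ h => (leavesCount_eq_of_le h).le

noncomputable instance : LocallyFiniteOrder PBT :=
  LocallyFiniteOrder.ofFiniteIcc fun _ b => (PBT.finite_Iic b).subset fun _ h => h.2

noncomputable instance : LocallyFiniteOrderBot PBT :=
  LocallyFiniteOrderBot.ofIic PBT (fun t => (PBT.finite_Iic t).toFinset) fun _ _ => by simp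

lemma node_mono {a a' b b' : PBT} (ha : a ≤ a') (hb : b ≤ b') :
    PBT.node a b ≤ PBT.node a' b' :=
  (tle_lift (PBT.node · b) (fun _ _ h => (TStep.left b h).le) ha).trans
    (tle_lift (PBT.node a') (fun _ _ h => (TStep.right a' h).le) hb)

lemma graft1_mono {v v' x x' : PBT} (hv : v ≤ v') (hx : x ≤ x') :
    graft1 v x ≤ graft1 v' x' := by
  have step_left {v v' : PBT} (x : PBT) (h : TStep v v') : TStep (graft1 v x) (graft1 v' x) := by
    induction h with
    | rot a b c => exact TStep.rot (graft1 a x) b c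
    | left c _ ih => exact TStep.left c ih
    | right a h _ => exact TStep.right (graft1 a x) h
  have step_right {x x' : PBT} (v : PBT) (h : TStep x x') :
      TStep (graft1 v x) (graft1 v x') := by
    induction v with
    | leaf => exact h
    | node _ r ih _ => exact TStep.left r ih
  exact (tle_lift (graft1 · x) (fun _ _ h => (step_left x h).le) hv).trans
    (tle_lift (graft1 v') (fun _ _ h => (step_right v' h).le) hx)

lemma lprod_mono {u u' w w' : PBT} (hu : u ≤ u') (hw : w ≤ w') : lprod u w ≤ lprod u' w' :=
  graft1_mono hw (node_mono hu le_rfl)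

lemma lprod_leaf (u : PBT) : lprod u .leaf = .node u .leaf := rfl

lemma lprod_node (u v w : PBT) : lprod u (.node v w) = .node (lprod u v) w := rfl

lemma lprod_le_node (u w : PBT) : lprod u w ≤ .node u w := by
  induction w with
  | leaf => exact le_rfl
  | node l r ih _ => exact (node_mono ih le_rfl).trans (TStep.rot u l r).le

lemma lprod_node_left_le (t u v : PBT) : lprod (.node t u) v ≤ .node t (lprod u v) := by
  induction v with
  | leaf => exact (TStep.rot t u .leaf).le
  | node l r ih _ => exact (node_mono ih le_rfl).trans (TStep.rot t _ r).le

lemma leavesCount_lprod (u w : PBT) :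
    leavesCount (lprod u w) = leavesCount u + leavesCount w := by
  induction w with
  | leaf => rfl
  | node l r ih _ => rw [lprod_node]; simp only [leavesCount, ih]; omega

namespace IncidenceAlgebra

variable {𝕜 α : Type*} [Ring 𝕜] [PartialOrder α] [LocallyFiniteOrder α] [DecidableEq α]

lemma eq_mu_of_sum_Icc_left (f : α → α → 𝕜) (hf : ∀ a b, ¬a ≤ b → f a b = 0)
    (hsum : ∀ a b, a ≤ b → ∑ x ∈ Icc a b, f x b = if a = b then 1 else 0) (a b : α) :
    f a b = mu 𝕜 a b := by
  let F : IncidenceAlgebra 𝕜 α := ⟨f, hf⟩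
  have zeta_mul_F : zeta 𝕜 * F = 1 := by
    ext a b hab
    rw [mul_apply, one_apply, ← hsum a b hab]
    refine sum_congr rfl fun x hx => ?_
    rw [zeta_of_le (mem_Icc.mp hx).1, one_mul]
    rfl
  have : F = mu 𝕜 := by
    rw [← one_mul F, ← mu_mul_zeta, mul_assoc, zeta_mul_F, mul_one]
  exact congrFun (congrFun (congrArg DFunLike.coe this) a) b

variable [LocallyFiniteOrderBot α]

lemma sum_Iic_mu_right (a b : α) : ∑ z ∈ Iic b, mu 𝕜 a z = if a = b then 1 else 0 := by
  rw [← sum_Icc_mu_right]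
  refine (sum_subset (fun z hz => mem_Iic.mpr (mem_Icc.mp hz).2)
    fun z hzb hza => apply_eq_zero_of_not_le (fun haz => hza ?_) _).symm
  exact mem_Icc.mpr ⟨haz, mem_Iic.mp hzb⟩

lemma moebius_inversion_Iic {G : Type*} [AddCommGroup G] [Module 𝕜 G] (f g : α → G)
    (h : ∀ x, g x = ∑ y ∈ Iic x, f y) (x : α) :
    f x = ∑ y ∈ Iic x, mu 𝕜 y x • g y := by
  have hswap (y z : α) : y ∈ Iic x ∧ z ∈ Iic y ↔ y ∈ Icc z x ∧ z ∈ Iic x := by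
    simp only [mem_Iic, mem_Icc]
    exact ⟨fun h => ⟨⟨h.2, h.1⟩, h.2.trans h.1⟩, fun h => ⟨h.1.2, h.1.1⟩⟩
  simp_rw [h, smul_sum]
  rw [sum_comm' hswap]
  simp_rw [← sum_smul, sum_Icc_mu_left, ite_smul, one_smul, zero_smul]
  rw [sum_ite_eq' _ x, if_pos (mem_Iic.mpr le_rfl)]

end IncidenceAlgebra

lemma finsum_ite_Icc {α G : Type*} [Preorder α] [LocallyFiniteOrder α] [AddCommMonoid G]
    (a b : α) (f : α → G) :
    (∑ᶠ z, if a ≤ z ∧ z ≤ b then f z else 0) = ∑ z ∈ Icc a b, f z := by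
  rw [finsum_eq_sum_of_support_subset _ fun z hz =>
    mem_coe.mpr (mem_Icc.mpr (by by_contra h; exact hz (if_neg h)))]
  exact sum_congr rfl fun z hz => if_pos (mem_Icc.mp hz)

namespace Option

lemma Rel.le_refl {α : Type*} [Preorder α] (x : Option α) : Rel (· ≤ ·) x x := by
  cases x <;> simp

lemma Rel.le_trans {α : Type*} [Preorder α] {x y z : Option α} (hxy : Rel (· ≤ ·) x y)
    (hyz : Rel (· ≤ ·) y z) : Rel (· ≤ ·) x z := by
  cases hxy <;> cases hyz
  · exact .some (‹_ ≤ _›.trans ‹_›)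
  · exact .none

lemma rel_some_right_iff {α β : Type*} {r : α → β → Prop} {z : Option α} {b : β} :
    Rel r z (some b) ↔ ∃ a, z = some a ∧ r a b := by
  cases z <;> simp

end Option

local infix:50 " ≼ " => Option.Rel (α := PBT) (β := PBT) (· ≤ ·)

def oleaves : Option PBT → ℕ
  | none => 0
  | some t => leavesCount t

lemma Option.Rel.oleaves_eq {x y : Option PBT} (h : x ≼ y) : oleaves x = oleaves y := by
  cases h
  · exact leavesCount_eq_of_le ‹_›
  · rfl

lemma oleaves_ovee (x y : Option PBT) : oleaves (ovee x y) = oleaves x + oleaves y := by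
  rcases x with _ | u <;> rcases y with _ | v <;> simp [ovee, oleaves, leavesCount]

lemma oleaves_olprod (x y : Option PBT) : oleaves (olprod x y) = oleaves x + oleaves y := by
  rcases x with _ | u <;> rcases y with _ | v <;> simp [olprod, oleaves, leavesCount_lprod]

lemma ovee_mono {x x' y y' : Option PBT} (hx : x ≼ x') (hy : y ≼ y') :
    ovee x y ≼ ovee x' y' := by
  cases hx <;> cases hy <;> simp [ovee, node_mono, *]

lemma olprod_mono {x x' y y' : Option PBT} (hx : x ≼ x') (hy : y ≼ y') :
    olprod x y ≼ olprod x' y' := by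
  cases hx <;> cases hy <;> simp [olprod, lprod_mono, *]

lemma ovee_assoc_le (x y z : Option PBT) : ovee (ovee x y) z ≼ ovee x (ovee y z) := by
  rcases x with _ | a <;> rcases y with _ | b <;> rcases z with _ | c <;> simp [ovee]
  exact (TStep.rot a b c).le

lemma olprod_ovee_right_le (x y z : Option PBT) :
    olprod x (ovee y z) ≼ ovee (olprod x y) z := by
  rcases x with _ | a <;> rcases y with _ | b <;> rcases z with _ | c <;>
    simp [olprod, ovee, lprod_le_node, lprod_node]

lemma olprod_ovee_left_le (x y z : Option PBT) :
    olprod (ovee x y) z ≼ ovee x (olprod y z) := by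
  rcases x with _ | a <;> rcases y with _ | b <;> rcases z with _ | c <;>
    simp [olprod, ovee, lprod_le_node, lprod_node_left_le]

/-- The cut of `t` at gap `i` into the parts of `t` to the left and to the right of the vertical
line through that gap. The gaps between consecutive leaves and at both ends are numbered
`0, …, leavesCount t`; a larger `i` acts as the last gap. -/
def splitAt : PBT → ℕ → Option PBT × Option PBT
  | .leaf, 0 => (none, some .leaf)
  | .leaf, _ + 1 => (some .leaf, none)
  | .node t w, i =>
    if i < leavesCount t then ((splitAt t i).1, ovee (splitAt t i).2 (some w))
    else (ovee (some t) (splitAt w (i - leavesCount t)).1, (splitAt w (i - leavesCount t)).2)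

lemma splitAt_node_of_lt {t w : PBT} {i : ℕ} (h : i < leavesCount t) :
    splitAt (.node t w) i = ((splitAt t i).1, ovee (splitAt t i).2 (some w)) := by
  rw [splitAt, if_pos h]

lemma splitAt_node_of_le {t w : PBT} {i : ℕ} (h : leavesCount t ≤ i) :
    splitAt (.node t w) i =
      (ovee (some t) (splitAt w (i - leavesCount t)).1, (splitAt w (i - leavesCount t)).2) := by
  rw [splitAt, if_neg h.not_gt]

lemma splitAt_zero (t : PBT) : splitAt t 0 = (none, some t) := by
  induction t with
  | leaf => rfl
  | node l r ih _ => rw [splitAt_node_of_lt (leavesCount_pos l), ih]; rfl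

lemma splitAt_of_leavesCount_le {t : PBT} {i : ℕ} (h : leavesCount t ≤ i) :
    splitAt t i = (some t, none) := by
  induction t generalizing i with
  | leaf => obtain ⟨j, rfl⟩ := Nat.exists_eq_add_of_le' h; rfl
  | node l r _ ih =>
    simp only [leavesCount] at h
    rw [splitAt_node_of_le (by omega), ih (by omega)]
    rfl

lemma splitAt_lprod (u v : PBT) : splitAt (lprod u v) (leavesCount u) = (some u, some v) := by
  induction v with
  | leaf => rw [lprod_leaf, splitAt_node_of_le le_rfl, Nat.sub_self, splitAt_zero]; rfl
  | node l r ih _ =>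
    have := leavesCount_pos l
    rw [lprod_node, splitAt_node_of_lt (by rw [leavesCount_lprod]; omega), ih]
    rfl

lemma splitAt_olprod {x y : Option PBT} {s : PBT} (h : olprod x y = some s) :
    splitAt s (oleaves x) = (x, y) := by
  rcases x with _ | u <;> rcases y with _ | v <;>
    simp only [olprod, Option.some.injEq, reduceCtorEq] at h <;> subst h
  · exact splitAt_zero v
  · exact splitAt_of_leavesCount_le le_rfl
  · exact splitAt_lprod u v

lemma oleaves_splitAt_fst {t : PBT} {i : ℕ} (h : i ≤ leavesCount t) :
    oleaves (splitAt t i).1 = i := by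
  induction t generalizing i with
  | leaf => rcases i with _ | _ | _ <;> first | rfl | simp [leavesCount] at h
  | node l r ihl ihr =>
    simp only [leavesCount] at h
    rcases lt_or_ge i (leavesCount l) with hi | hi
    · rw [splitAt_node_of_lt hi, ihl hi.le]
    · rw [splitAt_node_of_le hi, oleaves_ovee, ihr (by omega)]
      simp only [oleaves]
      omega

lemma TStep.splitAt_le {s t : PBT} (h : TStep s t) (i : ℕ) :
    (splitAt s i).1 ≼ (splitAt t i).1 ∧ (splitAt s i).2 ≼ (splitAt t i).2 := by
  induction h generalizing i with
  | rot a b c =>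
    rcases lt_or_ge i (leavesCount a) with ha | ha
    · rw [splitAt_node_of_lt (by simp only [leavesCount]; omega), splitAt_node_of_lt ha,
        splitAt_node_of_lt ha]
      exact ⟨Option.Rel.le_refl _, ovee_assoc_le _ _ _⟩
    rcases lt_or_ge i (leavesCount a + leavesCount b) with hb | hb
    · rw [splitAt_node_of_lt (by simp only [leavesCount]; omega), splitAt_node_of_le ha,
        splitAt_node_of_le ha, splitAt_node_of_lt (by omega)]
      exact ⟨Option.Rel.le_refl _, Option.Rel.le_refl _⟩
    · rw [splitAt_node_of_le (by simp only [leavesCount]; omega), splitAt_node_of_le ha,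
        splitAt_node_of_le (by omega), Nat.sub_sub]
      exact ⟨ovee_assoc_le (some a) (some b) _, Option.Rel.le_refl _⟩
  | @left a a' c h ih =>
    rcases lt_or_ge i (leavesCount a) with ha | ha
    · rw [splitAt_node_of_lt ha, splitAt_node_of_lt (h.leavesCount_eq ▸ ha)]
      exact ⟨(ih i).1, ovee_mono (ih i).2 (Option.Rel.le_refl _)⟩
    · rw [splitAt_node_of_le ha, splitAt_node_of_le (h.leavesCount_eq ▸ ha), h.leavesCount_eq]
      exact ⟨ovee_mono (.some h.le) (Option.Rel.le_refl _), Option.Rel.le_refl _⟩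
  | @right a c c' h ih =>
    rcases lt_or_ge i (leavesCount a) with ha | ha
    · rw [splitAt_node_of_lt ha, splitAt_node_of_lt ha]
      exact ⟨Option.Rel.le_refl _, ovee_mono (Option.Rel.le_refl _) (.some h.le)⟩
    · rw [splitAt_node_of_le ha, splitAt_node_of_le ha]
      exact ⟨ovee_mono (Option.Rel.le_refl _) (ih _).1, (ih _).2⟩

lemma splitAt_mono {s t : PBT} (h : s ≤ t) (i : ℕ) :
    (splitAt s i).1 ≼ (splitAt t i).1 ∧ (splitAt s i).2 ≼ (splitAt t i).2 := by
  induction h with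
  | refl => exact ⟨Option.Rel.le_refl _, Option.Rel.le_refl _⟩
  | tail _ h ih => exact ⟨ih.1.le_trans (h.splitAt_le i).1, ih.2.le_trans (h.splitAt_le i).2⟩

lemma olprod_splitAt_le (t : PBT) (i : ℕ) :
    olprod (splitAt t i).1 (splitAt t i).2 ≼ some t := by
  induction t generalizing i with
  | leaf => rcases i with _ | _ <;> exact Option.Rel.le_refl _
  | node l r ihl ihr =>
    rcases lt_or_ge i (leavesCount l) with hi | hi
    · rw [splitAt_node_of_lt hi]
      exact (olprod_ovee_right_le _ _ _).le_trans (ovee_mono (ihl i) (Option.Rel.le_refl _))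
    · rw [splitAt_node_of_le hi]
      exact (olprod_ovee_left_le _ _ _).le_trans (ovee_mono (Option.Rel.le_refl _) (ihr _))

lemma olprod_le_some_iff {x y : Option PBT} {t : PBT} :
    olprod x y ≼ some t ↔
      ∃ i ≤ leavesCount t, x ≼ (splitAt t i).1 ∧ y ≼ (splitAt t i).2 := by
  constructor
  · intro h
    obtain ⟨s, hxy, hst⟩ := Option.rel_some_right_iff.mp h
    have hleaves : oleaves x + oleaves y = leavesCount t := by
      rw [← oleaves_olprod, hxy, ← leavesCount_eq_of_le hst]; rfl
    refine ⟨oleaves x, by omega, ?_⟩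
    simpa only [splitAt_olprod hxy] using splitAt_mono hst (oleaves x)
  · rintro ⟨i, -, hx, hy⟩
    exact (olprod_mono hx hy).le_trans (olprod_splitAt_le t i)

lemma D0_node (t w : PBT) :
    D0 (.node t w) = Finsupp.mapDomain (fun p => (p.1, ovee p.2 (some w))) (D0 t) +
      Finsupp.mapDomain (fun p => (ovee (some t) p.1, p.2)) (D0 w) -
      Finsupp.single (some t, some w) 1 := by
  simp only [D0, Finsupp.smul_single_one]
  rfl

lemma D0_eq_sum_splitAt (t : PBT) :
    D0 t = ∑ i ∈ range (leavesCount t + 1), Finsupp.single (splitAt t i) 1 := by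
  induction t with
  | leaf =>
    show _ = ∑ i ∈ range 2, _
    rw [sum_range_succ, sum_range_one]
    rfl
  | node l r ihl ihr =>
    have hleft : ∀ i ∈ range (leavesCount l),
        Finsupp.single ((splitAt l i).1, ovee (splitAt l i).2 (some r)) (1 : ℤ) =
          Finsupp.single (splitAt (.node l r) i) 1 :=
      fun i hi => by rw [splitAt_node_of_lt (mem_range.mp hi)]
    have hright : ∀ j ∈ range (leavesCount r + 1),
        Finsupp.single (ovee (some l) (splitAt r j).1, (splitAt r j).2) (1 : ℤ) =
          Finsupp.single (splitAt (.node l r) (leavesCount l + j)) 1 :=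
      fun j _ => by rw [splitAt_node_of_le (Nat.le_add_right _ _), Nat.add_sub_cancel_left]
    rw [D0_node, ihl, ihr, Finsupp.mapDomain_finsetSum, Finsupp.mapDomain_finsetSum,
      sum_range_succ, splitAt_of_leavesCount_le le_rfl]
    simp only [Finsupp.mapDomain_single]
    rw [sum_congr rfl hleft, sum_congr rfl hright, leavesCount, Nat.add_assoc,
      sum_range_add _ (leavesCount l) (leavesCount r + 1), ovee]
    abel

/-- Every factorization `s = z₁ ⋋ z₂` is the cut of `s` at gap `oleaves z₁`. -/
def factorizations (s : PBT) : Finset (Option PBT × Option PBT) :=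
  ((range (leavesCount s + 1)).image (splitAt s)).filter fun p => olprod p.1 p.2 = some s

lemma mem_factorizations {s : PBT} {p : Option PBT × Option PBT} :
    p ∈ factorizations s ↔ olprod p.1 p.2 = some s := by
  refine ⟨fun h => (mem_filter.mp h).2, fun h => mem_filter.mpr ⟨?_, h⟩⟩
  have hleaves : oleaves p.1 + oleaves p.2 = leavesCount s := by
    rw [← oleaves_olprod, h]; rfl
  exact mem_image.mpr ⟨oleaves p.1, mem_range.mpr (by omega), splitAt_olprod h⟩

lemma finsum_ite_olprod_eq {G : Type*} [AddCommMonoid G] (F : Option PBT × Option PBT → G)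
    (s : PBT) :
    (∑ᶠ p : Option PBT × Option PBT, if olprod p.1 p.2 = some s then F p else 0) =
      ∑ p ∈ factorizations s, F p := by
  rw [factorizations, sum_filter]
  refine finsum_eq_sum_of_support_subset _ fun p hp => ?_
  have h : olprod p.1 p.2 = some s := by by_contra h; exact hp (if_neg h)
  exact (mem_filter.mp (mem_factorizations.mpr h)).1

noncomputable def oIic : Option PBT → Finset (Option PBT)
  | none => {none}
  | some t => (Iic t).map Function.Embedding.some

lemma mem_oIic {x y : Option PBT} : x ∈ oIic y ↔ x ≼ y := by
  rcases x with _ | u <;> rcases y with _ | t <;> simp [oIic]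

lemma biUnion_Iic_factorizations (t : PBT) :
    (Iic t).biUnion factorizations =
      (range (leavesCount t + 1)).biUnion
        fun i => oIic (splitAt t i).1 ×ˢ oIic (splitAt t i).2 := by
  ext ⟨x, y⟩
  simp only [mem_biUnion, mem_Iic, mem_factorizations, mem_product, mem_oIic, mem_range,
    Nat.lt_succ_iff, ← olprod_le_some_iff, Option.rel_some_right_iff]
  exact ⟨fun ⟨s, hst, h⟩ => ⟨s, h, hst⟩, fun ⟨s, h, hst⟩ => ⟨s, hst, h⟩⟩

lemma pairwiseDisjoint_oIic_splitAt (t : PBT) :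
    (↑(range (leavesCount t + 1)) : Set ℕ).PairwiseDisjoint
      fun i => oIic (splitAt t i).1 ×ˢ oIic (splitAt t i).2 := by
  intro i hi j hj hij
  refine disjoint_left.mpr fun p hpi hpj => hij ?_
  simp only [coe_range, Set.mem_Iio, Nat.lt_succ_iff] at hi hj
  simp only [mem_product, mem_oIic] at hpi hpj
  rw [← oleaves_splitAt_fst hi, ← oleaves_splitAt_fst hj, ← hpi.1.oleaves_eq,
    hpj.1.oleaves_eq]

open TensorProduct in
lemma tens_eq_finsuppTensorFinsupp' (f g : Option PBT →₀ ℤ) :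
    tens f g = finsuppTensorFinsupp' ℤ (Option PBT) (Option PBT) (f ⊗ₜ g) := by
  conv_rhs => rw [← f.sum_single, ← g.sum_single]
  simp only [Finsupp.sum, sum_tmul, tmul_sum, map_sum, tens, Finsupp.smul_single_one,
    finsuppTensorFinsupp'_single_tmul_single]
  exact sum_comm

lemma tens_sum_sum {ι κ : Type*} (s : Finset ι) (s' : Finset κ) (f : ι → Option PBT →₀ ℤ)
    (g : κ → Option PBT →₀ ℤ) :
    tens (∑ i ∈ s, f i) (∑ j ∈ s', g j) = ∑ p ∈ s ×ˢ s', tens (f p.1) (g p.2) := by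
  simp only [tens_eq_finsuppTensorFinsupp', TensorProduct.sum_tmul, TensorProduct.tmul_sum,
    map_sum, sum_product]
  exact sum_comm

lemma tens_single_single (x y : Option PBT) :
    tens (Finsupp.single x 1) (Finsupp.single y 1) = Finsupp.single (x, y) 1 := by
  rw [tens_eq_finsuppTensorFinsupp', finsuppTensorFinsupp'_single_tmul_single, mul_one]

lemma Dhat_mapDomain_some (f : PBT →₀ ℤ) :
    Dhat (Finsupp.mapDomain some f) = f.sum fun y a => a • D0 y := by
  simp only [Dhat, ← Finsupp.linearCombination_apply, Finsupp.linearCombination_mapDomain]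
  rfl

noncomputable def withUnit (M : PBT → PBT →₀ ℤ) (z : Option PBT) : Option PBT →₀ ℤ :=
  Option.elim z (Finsupp.single none 1) fun u => Finsupp.mapDomain some (M u)

section MoebiusBasis

variable {M : PBT → PBT →₀ ℤ} (hM : ∀ t, ∑ s ∈ Iic t, M s = Finsupp.single t 1)
include hM

lemma sum_oIic_withUnit (y : Option PBT) :
    ∑ z ∈ oIic y, withUnit M z = Finsupp.single y 1 := by
  cases y with
  | none => exact sum_singleton _ _
  | some t =>
    rw [oIic, sum_map]
    simp only [Function.Embedding.some_apply, withUnit, Option.elim_some]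
    rw [← Finsupp.mapDomain_finsetSum, hM, Finsupp.mapDomain_single]

lemma sum_Iic_sum_factorizations (t : PBT) :
    ∑ s ∈ Iic t, ∑ p ∈ factorizations s, tens (withUnit M p.1) (withUnit M p.2) = D0 t := by
  have hdisj : (↑(Iic t) : Set PBT).PairwiseDisjoint factorizations :=
    fun s _ s' _ hss' => disjoint_left.mpr fun p hs hs' => hss' <|
      Option.some_injective _ ((mem_factorizations.mp hs).symm.trans (mem_factorizations.mp hs'))
  rw [← sum_biUnion hdisj, biUnion_Iic_factorizations,
    sum_biUnion (pairwiseDisjoint_oIic_splitAt t), D0_eq_sum_splitAt]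
  refine sum_congr rfl fun i _ => ?_
  rw [← tens_sum_sum, sum_oIic_withUnit hM, sum_oIic_withUnit hM, tens_single_single]

end MoebiusBasis

/-- (Aguiar–Sottile formula) `Δ(M_t) = Σ_{z₁ ⋋ z₂ = t} M_{z₁} ⊗ M_{z₂}`, the
sum running over all factorizations of `t`, including the trivial ones with
`z₁ = 1` or `z₂ = 1` (setting `M_1 = 1`). -/
theorem stmt16
    (μ : PBT → PBT → ℤ) (M : PBT → (PBT →₀ ℤ))
    (hM : ∀ t w : PBT, M t w = μ w t)
    (hμrefl : ∀ t : PBT, μ t t = 1)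
    (hμzero : ∀ w t : PBT, ¬ tle w t → μ w t = 0)
    (hμsum : ∀ w t : PBT, tle w t → w ≠ t →
      (∑ᶠ z : PBT, if tle w z ∧ tle z t then μ z t else 0) = 0)
    (t : PBT) :
    Dhat (Finsupp.mapDomain some (M t)) =
      ∑ᶠ p : Option PBT × Option PBT,
        if olprod p.1 p.2 = some t then
          tens (Option.elim p.1 (Finsupp.single none 1)
                  (fun z => Finsupp.mapDomain some (M z)))
               (Option.elim p.2 (Finsupp.single none 1)
                  (fun z => Finsupp.mapDomain some (M z)))
        else 0 := by
  have hμ_eq_mu : ∀ w t, μ w t = IncidenceAlgebra.mu ℤ w t :=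
    IncidenceAlgebra.eq_mu_of_sum_Icc_left μ hμzero fun w t hwt => by
      rcases eq_or_ne w t with rfl | hne
      · rw [Icc_self, sum_singleton, hμrefl, if_pos rfl]
      · rw [← finsum_ite_Icc, if_neg hne]
        exact hμsum w t hwt hne
  have hMsum : ∀ t, ∑ s ∈ Iic t, M s = Finsupp.single t 1 := fun t => by
    ext w
    simp only [Finsupp.finsetSum_apply, hM, hμ_eq_mu, IncidenceAlgebra.sum_Iic_mu_right,
      Finsupp.single_apply, eq_comm]
  have hsupp : (M t).support ⊆ Iic t := fun w hw => mem_Iic.mpr <| by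
    by_contra h
    exact Finsupp.mem_support_iff.mp hw (by rw [hM, hμzero w t h])
  calc Dhat (Finsupp.mapDomain some (M t))
      = ∑ w ∈ Iic t, IncidenceAlgebra.mu ℤ w t • D0 w := by
        rw [Dhat_mapDomain_some, Finsupp.sum_of_support_subset _ hsupp (fun w a => a • D0 w)
          fun _ _ => zero_smul _ _]
        simp only [hM, hμ_eq_mu]
    _ = ∑ p ∈ factorizations t, tens (withUnit M p.1) (withUnit M p.2) :=
        (IncidenceAlgebra.moebius_inversion_Iic _ D0
          (fun s => (sum_Iic_sum_factorizations hMsum s).symm) t).symm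
    _ = _ := (finsum_ite_olprod_eq _ t).symm
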